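/- Fix ℓ ∈ ½ℕ with 2ℓ ≥ 1 and α ∈ ℝ. Let C_α be the (2ℓ+1)×(2ℓ+1) tridiagonal matrix with entries (C_α)_{n,n+1} = -(2ℓ-n)(2ℓ+α)/(4ℓ), (C_α)_{n,n} = ((2ℓ+α)(2ℓ-n) + n(2ℓ-α))/(4ℓ) + 3/2, (C_α)_{n,n-1} = -(2ℓ-α)n/(4ℓ). Then C_α is diagonalizable with eigenvalues (2j+3)/2 for j ∈ {0, 1, ..., 2ℓ}. -/

import Mathlib

/-!
Acting on row vectors, read as polynomials of degree `≤ L` through their coefficients,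
`C_α - 3/2` is the differential operator `f ↦ (X - 1) ((p X + q) f' - p L f)` with `q = 1 - p`.
By the product rule, `(X - 1)^j (p X + q)^(L - j)` is an eigenpolynomial of it with eigenvalue
`j (p + q) = j`. These `L + 1` polynomials are nonzero of degree `≤ L`, and left eigenvectors for
distinct eigenvalues are linearly independent, so their coefficient matrix is invertible and
conjugates `C_α` to the diagonal matrix of the `j + 3/2`.
-/

open Matrix Polynomial

/-- The tridiagonal matrix `C_α` (with `L = 2ℓ`, so `4ℓ = 2L`). -/
noncomputable def Cmat (L : ℕ) (α : ℝ) : Matrix (Fin (L+1)) (Fin (L+1)) ℝ :=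
  Matrix.of fun i j =>
    if (j:ℕ) = (i:ℕ)+1 then -(((L:ℝ)-(i:ℕ))*((L:ℝ)+α))/(2*(L:ℝ))
    else if (i:ℕ) = (j:ℕ)+1 then -(((L:ℝ)-α)*((i:ℕ):ℝ))/(2*(L:ℝ))
    else if i = j then
      (((L:ℝ)+α)*((L:ℝ)-(i:ℕ)) + ((i:ℕ):ℝ)*((L:ℝ)-α))/(2*(L:ℝ)) + 3/2
    else 0

theorem Matrix.exists_isUnit_eq_mul_diagonal_mul_inv_of_vecMul_eq_smul {ι K : Type*} [Fintype ι]
    [DecidableEq ι] [Field K] (A : Matrix ι ι K) {d : ι → K} (hd : Function.Injective d)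
    {v : ι → ι → K} (hv : ∀ i, v i ≠ 0) (hvA : ∀ i, v i ᵥ* A = d i • v i) :
    ∃ P : Matrix ι ι K, IsUnit P ∧ A = P * diagonal d * P⁻¹ := by
  set Q : Matrix ι ι K := of v
  have hQ : IsUnit Q := by
    rw [← linearIndependent_rows_iff_isUnit]
    refine Module.End.eigenvectors_linearIndependent' (vecMulLinear A) d hd v fun i => ?_
    exact Module.End.hasEigenvector_iff.mpr ⟨Module.End.mem_eigenspace_iff.mpr (hvA i), hv i⟩
  have hQA : Q * A = diagonal d * Q := by
    ext i j
    rw [mul_apply_eq_vecMul, diagonal_mul]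
    exact congrFun (hvA i) j
  have hQdet : IsUnit Q.det := (isUnit_iff_isUnit_det Q).mp hQ
  refine ⟨Q⁻¹, isUnit_nonsing_inv_iff.mpr hQ, ?_⟩
  rw [nonsing_inv_nonsing_inv Q hQdet, Matrix.mul_assoc, ← hQA]
  exact (nonsing_inv_mul_cancel_left Q A hQdet).symm

theorem Polynomial.coeff_linearMap_apply {R : Type*} [CommSemiring R] (T : R[X] →ₗ[R] R[X])
    {f : R[X]} {N : ℕ} (hf : f.natDegree < N) (m : ℕ) :
    (T f).coeff m = ∑ n ∈ Finset.range N, f.coeff n * (T (X ^ n)).coeff m := by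
  conv_lhs => rw [as_sum_range' f N hf]
  simp only [← smul_X_eq_monomial, map_sum, map_smul, finsetSum_coeff, coeff_smul, smul_eq_mul]

section KrawtchoukOp

variable {R : Type*} [CommRing R]

noncomputable def krawtchoukOp (p q : R) (L : ℕ) : R[X] →ₗ[R] R[X] :=
  LinearMap.mulLeft R (X - 1) ∘ₗ
    (LinearMap.mulLeft R (C p * X + C q) ∘ₗ derivative - LinearMap.mulLeft R (C (p * L)))

theorem krawtchoukOp_apply (p q : R) (L : ℕ) (f : R[X]) :
    krawtchoukOp p q L f = (X - 1) * ((C p * X + C q) * derivative f - C (p * L) * f) :=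
  rfl

theorem krawtchoukOp_X_pow (p q : R) (L n : ℕ) :
    krawtchoukOp p q L (X ^ n) = C (p * n - p * L) * X ^ (n + 1) + C (p * L + n * (q - p)) * X ^ n
      - C (n * q) * X ^ (n - 1) := by
  rw [krawtchoukOp_apply, derivative_X_pow]
  rcases n with _ | n
  · simp only [Nat.cast_zero, map_zero, zero_mul, mul_zero, zero_sub, zero_add, add_zero, sub_zero,
      pow_zero, pow_one, mul_one, map_neg]
    ring
  · simp only [C_sub, C_mul, C_add, add_tsub_cancel_right, pow_succ]
    push_cast
    ring

-- When `p + q = 1` and `q ≠ 0`, `eigenPoly p q j (L - j)` equals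
-- `(-1)^j q^(L-j) ∑ₙ (L choose n) K_j(n; p, L) (p X / q)ⁿ` by the generating function of the
-- Krawtchouk polynomials.
noncomputable def eigenPoly (p q : R) (j M : ℕ) : R[X] := (X - 1) ^ j * (C p * X + C q) ^ M

theorem krawtchoukOp_eigenPoly (p q : R) (j M : ℕ) :
    krawtchoukOp p q (j + M) (eigenPoly p q j M) = C (j * (p + q)) * eigenPoly p q j M := by
  rw [krawtchoukOp_apply, eigenPoly, derivative_mul, derivative_pow, derivative_pow]
  rcases j with _ | j <;> rcases M with _ | M <;>
    simp only [derivative_sub, derivative_mul, derivative_X, derivative_C, derivative_one,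
      Nat.cast_zero, Nat.cast_add, Nat.cast_one, map_zero, map_add, map_one, map_mul, zero_mul,
      mul_zero, zero_add, add_zero, sub_zero, add_tsub_cancel_right, pow_succ, pow_zero] <;> ring

theorem natDegree_eigenPoly_le (p q : R) (j M : ℕ) : (eigenPoly p q j M).natDegree ≤ j + M := by
  unfold eigenPoly
  compute_degree

theorem eigenPoly_ne_zero [IsDomain R] {p q : R} (hpq : p + q ≠ 0) (j M : ℕ) :
    eigenPoly p q j M ≠ 0 := by
  have hlin : C p * X + C q ≠ 0 := fun h => hpq (by simpa using congrArg (eval 1) h)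
  exact mul_ne_zero (pow_ne_zero _ (X_sub_C_ne_zero 1)) (pow_ne_zero _ hlin)

end KrawtchoukOp

noncomputable def krawtchoukP (L : ℕ) (α : ℝ) : ℝ := (L + α) / (2 * L)

-- Not `1 - krawtchoukP L α`: this form makes `Cmat_apply` hold also at `L = 0`.
noncomputable def krawtchoukQ (L : ℕ) (α : ℝ) : ℝ := (L - α) / (2 * L)

theorem krawtchoukP_add_krawtchoukQ {L : ℕ} (hL : L ≠ 0) (α : ℝ) :
    krawtchoukP L α + krawtchoukQ L α = 1 := by
  rw [krawtchoukP, krawtchoukQ, ← add_div, div_eq_one_iff_eq (by positivity)]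
  ring

theorem Cmat_apply (L : ℕ) (α : ℝ) (n m : Fin (L+1)) :
    Cmat L α n m = (krawtchoukOp (krawtchoukP L α) (krawtchoukQ L α) L (X ^ (n : ℕ))).coeff m
      + if n = m then 3 / 2 else 0 := by
  simp only [Cmat, krawtchoukP, krawtchoukQ, of_apply, krawtchoukOp_X_pow, coeff_add, coeff_sub,
    coeff_C_mul_X_pow, Fin.ext_iff]
  -- in the remaining case `n = m = n - 1`, so `n = 0` and the term of `X ^ (n - 1)` vanishes
  split_ifs <;> first | omega | ring1 | (rw [show (n : ℕ) = 0 by omega]; push_cast; ring)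

theorem coeffVec_vecMul_Cmat (L : ℕ) (α : ℝ) {f : ℝ[X]} (hf : f.natDegree ≤ L) :
    (fun n : Fin (L+1) => f.coeff n) ᵥ* Cmat L α = fun m : Fin (L+1) =>
      (krawtchoukOp (krawtchoukP L α) (krawtchoukQ L α) L f).coeff m + 3 / 2 * f.coeff m := by
  ext m
  rw [coeff_linearMap_apply _ (Nat.lt_succ_of_le hf), ← Fin.sum_univ_eq_sum_range]
  simp only [vecMul, dotProduct, Cmat_apply, mul_add, Finset.sum_add_distrib, mul_ite, mul_zero,
    Finset.sum_ite_eq', Finset.mem_univ, if_true, mul_comm (f.coeff m)]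

/-- Lemma 4.2: `C_α` is diagonalizable with eigenvalues `(2j+3)/2`, `j ∈ {0,…,2ℓ}`. -/
theorem Cmat_diagonalizable (L : ℕ) (hL : 1 ≤ L) (α : ℝ) :
    ∃ P : Matrix (Fin (L+1)) (Fin (L+1)) ℝ, IsUnit P ∧
      Cmat L α = P * Matrix.diagonal (fun j : Fin (L+1) => (2*((j:ℕ):ℝ)+3)/2) * P⁻¹ := by
  have hpq := krawtchoukP_add_krawtchoukQ (by omega : L ≠ 0) α
  have hdeg (j : Fin (L+1)) :
      (eigenPoly (krawtchoukP L α) (krawtchoukQ L α) j (L - j)).natDegree ≤ L :=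
    (natDegree_eigenPoly_le _ _ _ _).trans (by omega)
  refine exists_isUnit_eq_mul_diagonal_mul_inv_of_vecMul_eq_smul _ (fun i j hij => ?_)
    (v := fun j n => (eigenPoly (krawtchoukP L α) (krawtchoukQ L α) j (L - j)).coeff n)
    (fun j hj => ?_) (fun j => ?_)
  · ext
    simpa using hij
  · refine eigenPoly_ne_zero (by rw [hpq]; exact one_ne_zero) j (L - j) ?_
    rw [ext_iff_natDegree_le (hdeg j) (by simp)]
    intro i hi
    simpa using congrFun hj ⟨i, by omega⟩
  · have heig := krawtchoukOp_eigenPoly (krawtchoukP L α) (krawtchoukQ L α) j (L - j)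
    rw [Nat.add_sub_cancel' (Nat.le_of_lt_succ j.isLt), hpq] at heig
    ext m
    simp only [coeffVec_vecMul_Cmat L α (hdeg j), heig, coeff_C_mul, Pi.smul_apply, smul_eq_mul]
    ring
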